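/- The leading order coefficient of the formal solution is A₁(u) = -u/4: substituting Z(d,u) = A₁(u)·d² into the discretized pendulum equation written in the variable u, the residual is O(d⁶); i.e., the unique odd linear polynomial making the d⁴-coefficient of the residual vanish is A₁(u) = -u/4. -/

import Mathlib

open Asymptotics Filter

/-- step size as a function of `d`: `ε = 2 sinh(d/2)` -/
noncomputable def eps (d : ℝ) : ℝ := 2 * Real.sinh (d / 2)

/-- the ansatz `q(t) = √(1-u²)·(a·u)·d² + 4 arctan(e^{-dt/ε})` with `u = tanh(dt/ε)`,
for the candidate leading coefficient `A₁(u) = a·u`. -/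
noncomputable def qAnsatz (a d t : ℝ) : ℝ :=
  Real.sqrt (1 - Real.tanh (d * t / eps d) ^ 2) *
      (a * Real.tanh (d * t / eps d)) * d ^ 2 +
    4 * Real.arctan (Real.exp (-(d * t / eps d)))

/-- residual of the discretized pendulum equation -/
noncomputable def pendResidual (a d t : ℝ) : ℝ :=
  qAnsatz a d (t + eps d) + qAnsatz a d (t - eps d) - 2 * qAnsatz a d t -
    (eps d) ^ 2 * Real.sin (qAnsatz a d t)

/-!
Put `s = d t / ε`. A time step `t ↦ t ± ε` is the shift `s ↦ s ± d`, and since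
`√(1 - u²) u = φ''(s) / 2` for the kink `φ(s) = 4 arctan (exp (-s))`, the ansatz is
`q = d² (a / 2) φ''(s) + φ(s)`. Taylor expansion of the second differences of `φ` and `φ''`,
of `ε² = d² + d⁴ / 12 + O(d⁶)` and of `sin (φ + X) = sin φ + X cos φ + O(X²)` shows that the
pendulum equation `φ'' = sin φ` kills the `d²` terms, and that the `d⁴` coefficient of the
residual is `-(1 + 4a) tanh s / cosh³ s`. At `t = 1`, where `s → 1`, this coefficient is nonzero
unless `a = -1/4`.
-/

open Real Polynomial Topology Set

section DerivativeChain

variable {𝕜 F : Type*} [NontriviallyNormedField 𝕜] [NormedAddCommGroup F] [NormedSpace 𝕜 F]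
  {f : ℕ → 𝕜 → F}

theorem iteratedDeriv_eq_of_hasDerivAt_succ (hf : ∀ k x, HasDerivAt (f k) (f (k + 1) x) x)
    (k : ℕ) : iteratedDeriv k (f 0) = f k := by
  induction k with
  | zero => exact iteratedDeriv_zero
  | succ k ih => rw [iteratedDeriv_succ, ih]; exact funext fun x => (hf k x).deriv

theorem contDiff_of_hasDerivAt_succ (hf : ∀ k x, HasDerivAt (f k) (f (k + 1) x) x) (n : ℕ∞) :
    ContDiff 𝕜 n (f 0) :=
  contDiff_of_differentiable_iteratedDeriv fun m _ => by
    rw [iteratedDeriv_eq_of_hasDerivAt_succ hf]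
    exact fun x => (hf m x).differentiableAt

end DerivativeChain

open Nat in
theorem abs_sub_sum_taylor_le {f : ℝ → ℝ} {n : ℕ} {M x₀ x : ℝ} (hf : ContDiff ℝ (n + 1) f)
    (hM : ∀ y ∈ uIcc x₀ x, |iteratedDeriv (n + 1) f y| ≤ M) :
    |f x - ∑ k ∈ Finset.range (n + 1), iteratedDeriv k f x₀ * (x - x₀) ^ k / k !| ≤
      M * |x - x₀| ^ (n + 1) / (n + 1)! := by
  rcases eq_or_ne x₀ x with rfl | hx
  · rw [Finset.sum_range_succ']
    simp
  obtain ⟨y, hy, hrem⟩ := taylor_mean_remainder_lagrange_iteratedDeriv hx hf.contDiffOn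
  have htaylor : taylorWithinEval f n (uIcc x₀ x) x₀ x =
      ∑ k ∈ Finset.range (n + 1), iteratedDeriv k f x₀ * (x - x₀) ^ k / k ! := by
    rw [taylor_within_apply]
    refine Finset.sum_congr rfl fun k hk => ?_
    rw [iteratedDerivWithin_eq_iteratedDeriv (uniqueDiffOn_uIcc hx) _ left_mem_uIcc, smul_eq_mul]
    · ring
    · exact hf.contDiffAt.of_le (by exact_mod_cast (Finset.mem_range.1 hk).le)
  rw [← htaylor, hrem, abs_div, abs_mul, abs_pow, abs_of_pos (by positivity : (0 : ℝ) < (n + 1)!)]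
  gcongr
  exact hM y (uIoo_subset_uIcc_self hy)

open Nat in
theorem abs_add_sub_sum_taylor_le {f : ℝ → ℝ} {n : ℕ} {M s d : ℝ} (hf : ContDiff ℝ (n + 1) f)
    (hM : ∀ y, |y - s| ≤ |d| → |iteratedDeriv (n + 1) f y| ≤ M) :
    |f (s + d) + f (s - d) -
        ∑ k ∈ Finset.range (n + 1), iteratedDeriv k f s * (d ^ k + (-d) ^ k) / k !| ≤
      2 * M * |d| ^ (n + 1) / (n + 1)! := by
  have hplus := abs_sub_sum_taylor_le (x₀ := s) (x := s + d) hf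
    fun y hy => hM y (by simpa using abs_sub_left_of_mem_uIcc hy)
  have hminus := abs_sub_sum_taylor_le (x₀ := s) (x := s - d) hf
    fun y hy => hM y (by simpa using abs_sub_left_of_mem_uIcc hy)
  simp only [add_sub_cancel_left, sub_sub_cancel_left, abs_neg] at hplus hminus
  calc _ = |(f (s + d) - ∑ k ∈ Finset.range (n + 1), iteratedDeriv k f s * d ^ k / k !) +
        (f (s - d) - ∑ k ∈ Finset.range (n + 1), iteratedDeriv k f s * (-d) ^ k / k !)| := by
        simp only [mul_add, add_div, Finset.sum_add_distrib]
        ring_nf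
    _ ≤ M * |d| ^ (n + 1) / (n + 1)! + M * |d| ^ (n + 1) / (n + 1)! :=
        (abs_add_le _ _).trans (add_le_add hplus hminus)
    _ = _ := by ring

theorem hasDerivAt_tanh (x : ℝ) : HasDerivAt tanh (1 - tanh x ^ 2) x := by
  have hc := (cosh_pos x).ne'
  have h := (hasDerivAt_sinh x).div (hasDerivAt_cosh x) hc
  rw [show sinh / cosh = tanh from funext fun y => (tanh_eq_sinh_div_cosh y).symm] at h
  refine h.congr_deriv ?_
  rw [tanh_eq_sinh_div_cosh]
  field_simp

theorem abs_tanh_le_one (x : ℝ) : |tanh x| ≤ 1 := by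
  rw [tanh_eq_sinh_div_cosh, abs_div, abs_of_pos (cosh_pos x), div_le_one (cosh_pos x), abs_le]
  exact ⟨by linarith [sinh_lt_cosh (x := -x), sinh_neg x, cosh_neg x], (sinh_lt_cosh (x := x)).le⟩

theorem hasDerivAt_eval_tanh_div_cosh (P : ℝ[X]) (x : ℝ) :
    HasDerivAt (fun y => P.eval (tanh y) / cosh y)
      (((1 - X ^ 2) * derivative P - X * P).eval (tanh x) / cosh x) x := by
  have hc := (cosh_pos x).ne'
  refine (((P.hasDerivAt (tanh x)).comp x (hasDerivAt_tanh x)).div (hasDerivAt_cosh x) hc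
    |>.congr_deriv ?_)
  simp only [eval_sub, eval_mul, eval_pow, eval_one, eval_X, Function.comp_apply]
  rw [tanh_eq_sinh_div_cosh]
  field_simp

noncomputable def kinkPoly : ℕ → ℝ[X]
  | 0 => C (-2)
  | k + 1 => (1 - X ^ 2) * derivative (kinkPoly k) - X * kinkPoly k

noncomputable def kinkDeriv : ℕ → ℝ → ℝ
  | 0, x => 4 * arctan (exp (-x))
  | k + 1, x => (kinkPoly k).eval (tanh x) / cosh x

theorem hasDerivAt_kinkDeriv : ∀ k x, HasDerivAt (kinkDeriv k) (kinkDeriv (k + 1) x) x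
  | 0, x => by
    have h := (((hasDerivAt_neg x).exp).arctan).const_mul 4
    refine h.congr_deriv ?_
    simp only [kinkDeriv, kinkPoly, eval_C, cosh_eq, exp_neg]
    field_simp
    ring
  | k + 1, x => hasDerivAt_eval_tanh_div_cosh (kinkPoly k) x

theorem contDiff_kinkDeriv (m : ℕ) (n : ℕ∞) : ContDiff ℝ n (kinkDeriv m) :=
  contDiff_of_hasDerivAt_succ (f := fun k => kinkDeriv (m + k))
    (fun _ x => hasDerivAt_kinkDeriv _ x) n

theorem iteratedDeriv_kinkDeriv (m k : ℕ) : iteratedDeriv k (kinkDeriv m) = kinkDeriv (m + k) :=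
  iteratedDeriv_eq_of_hasDerivAt_succ (f := fun k => kinkDeriv (m + k))
    (fun _ x => hasDerivAt_kinkDeriv _ x) k

theorem exists_abs_kinkDeriv_le (k : ℕ) : ∃ M, ∀ x, |kinkDeriv (k + 1) x| ≤ M := by
  obtain ⟨M, hM⟩ := (isCompact_Icc (a := -1) (b := 1)).exists_bound_of_continuousOn
    (kinkPoly k).continuous.continuousOn
  refine ⟨M, fun x => ?_⟩
  have hP := hM (tanh x) (abs_le.1 (abs_tanh_le_one x))
  rw [kinkDeriv, abs_div, abs_of_pos (cosh_pos x)]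
  exact (div_le_self (abs_nonneg _) (one_le_cosh x)).trans hP

theorem kinkDeriv_two (x : ℝ) : kinkDeriv 2 x = 2 * tanh x / cosh x := by
  simp [kinkDeriv, kinkPoly]

theorem kinkDeriv_four (x : ℝ) : kinkDeriv 4 x = (12 * tanh x ^ 3 - 10 * tanh x) / cosh x := by
  simp [kinkDeriv, kinkPoly]
  ring

theorem sin_two_mul_arctan_exp_neg (x : ℝ) : sin (2 * arctan (exp (-x))) = 1 / cosh x := by
  have h := sq_sqrt (by positivity : (0 : ℝ) ≤ 1 + exp (-x) ^ 2)
  have hs : sin (2 * arctan (exp (-x))) = 2 * exp (-x) / (1 + exp (-x) ^ 2) := by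
    rw [sin_two_mul, sin_arctan, cos_arctan]
    field_simp
    rw [h]
  rw [hs, cosh_eq, exp_neg]
  field_simp

theorem cos_two_mul_arctan_exp_neg (x : ℝ) : cos (2 * arctan (exp (-x))) = tanh x := by
  rw [cos_two_mul, cos_sq_arctan, tanh_eq_sinh_div_cosh, sinh_eq, cosh_eq, exp_neg]
  field_simp
  ring

theorem kinkDeriv_zero_eq_two_mul (x : ℝ) : kinkDeriv 0 x = 2 * (2 * arctan (exp (-x))) := by
  rw [kinkDeriv]
  ring

theorem sin_kinkDeriv_zero (x : ℝ) : sin (kinkDeriv 0 x) = kinkDeriv 2 x := by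
  rw [kinkDeriv_two, kinkDeriv_zero_eq_two_mul, sin_two_mul, sin_two_mul_arctan_exp_neg,
    cos_two_mul_arctan_exp_neg]
  ring

theorem cos_kinkDeriv_zero (x : ℝ) : cos (kinkDeriv 0 x) = 1 - 2 / cosh x ^ 2 := by
  have hc := (cosh_pos x).ne'
  rw [kinkDeriv_zero_eq_two_mul, cos_two_mul, cos_two_mul_arctan_exp_neg, tanh_eq_sinh_div_cosh]
  field_simp
  linear_combination -2 * cosh_sq x

theorem exists_abs_kink_second_difference_sub_le :
    ∃ C, ∀ x d, |kinkDeriv 0 (x + d) + kinkDeriv 0 (x - d) - 2 * kinkDeriv 0 x -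
      d ^ 2 * kinkDeriv 2 x - d ^ 4 / 12 * kinkDeriv 4 x| ≤ C * |d| ^ 6 := by
  obtain ⟨M, hM⟩ := exists_abs_kinkDeriv_le 5
  refine ⟨M / 360, fun x d => ?_⟩
  have h := abs_add_sub_sum_taylor_le (n := 5) (s := x) (d := d) (contDiff_kinkDeriv 0 _)
    fun y _ => by rw [iteratedDeriv_kinkDeriv]; exact hM y
  simp only [Finset.sum_range_succ, Finset.sum_range_zero, iteratedDeriv_kinkDeriv,
    Nat.factorial, Nat.reduceAdd] at h
  convert h using 2 <;> push_cast <;> ring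

theorem exists_abs_kinkDeriv_two_second_difference_sub_le :
    ∃ C, ∀ x d, |kinkDeriv 2 (x + d) + kinkDeriv 2 (x - d) - 2 * kinkDeriv 2 x -
      d ^ 2 * kinkDeriv 4 x| ≤ C * |d| ^ 4 := by
  obtain ⟨M, hM⟩ := exists_abs_kinkDeriv_le 5
  refine ⟨M / 12, fun x d => ?_⟩
  have h := abs_add_sub_sum_taylor_le (n := 3) (s := x) (d := d) (contDiff_kinkDeriv 2 _)
    fun y _ => by rw [iteratedDeriv_kinkDeriv]; exact hM y
  simp only [Finset.sum_range_succ, Finset.sum_range_zero, iteratedDeriv_kinkDeriv,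
    Nat.factorial, Nat.reduceAdd] at h
  convert h using 2 <;> push_cast <;> ring

theorem abs_sin_add_sub_le (p x : ℝ) : |sin (p + x) - sin p - x * cos p| ≤ x ^ 2 / 2 := by
  have h := abs_sub_sum_taylor_le (n := 1) (x₀ := p) (x := p + x) contDiff_sin
    fun y _ => abs_iteratedDeriv_sin_le_one _ y
  simp only [Finset.sum_range_succ, Finset.sum_range_zero, iteratedDeriv_zero, iteratedDeriv_one,
    Real.deriv_sin, add_sub_cancel_left] at h
  convert h using 2 <;> push_cast [Nat.factorial, sq_abs] <;> ring

theorem eps_sq (d : ℝ) : eps d ^ 2 = exp d + exp (-d) - 2 := by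
  have h : exp (d / 2) ^ 2 = exp d := by rw [← exp_nat_mul]; ring_nf
  have h' : exp (-(d / 2)) ^ 2 = exp (-d) := by rw [← exp_nat_mul]; ring_nf
  have h'' : exp (d / 2) * exp (-(d / 2)) = 1 := by rw [← exp_add]; simp
  rw [eps, sinh_eq]
  linear_combination h + h' - 2 * h''

theorem abs_eps_sq_sub_le {d : ℝ} (hd : |d| ≤ 1) :
    |eps d ^ 2 - d ^ 2 - d ^ 4 / 12| ≤ exp 1 / 360 * |d| ^ 6 := by
  have hexp : ∀ k, iteratedDeriv k exp = exp :=
    iteratedDeriv_eq_of_hasDerivAt_succ (f := fun _ => exp) fun _ x => hasDerivAt_exp x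
  have h := abs_add_sub_sum_taylor_le (n := 5) (s := 0) (d := d) (M := exp 1) contDiff_exp
    fun y hy => by
      rw [sub_zero] at hy
      rw [hexp, abs_of_pos (exp_pos y), exp_le_exp]
      linarith [le_abs_self y]
  simp only [Finset.sum_range_succ, Finset.sum_range_zero, hexp, exp_zero, Nat.factorial,
    zero_add, zero_sub] at h
  rw [eps_sq]
  convert h using 2 <;> push_cast <;> ring

theorem sqrt_one_sub_tanh_sq (x : ℝ) : √(1 - tanh x ^ 2) = 1 / cosh x := by
  have hc := cosh_pos x
  rw [← sqrt_sq (by positivity : 0 ≤ 1 / cosh x), tanh_eq_sinh_div_cosh]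
  congr 1
  field_simp
  linear_combination cosh_sq x

theorem eps_ne_zero {d : ℝ} (hd : d ≠ 0) : eps d ≠ 0 := by
  have h := sinh_injective.ne (div_ne_zero hd two_ne_zero)
  rw [sinh_zero] at h
  exact mul_ne_zero two_ne_zero h

noncomputable def kinkProfile (a d x : ℝ) : ℝ := d ^ 2 * (a / 2) * kinkDeriv 2 x + kinkDeriv 0 x

theorem qAnsatz_eq_kinkProfile (a d t : ℝ) : qAnsatz a d t = kinkProfile a d (d * t / eps d) := by
  rw [qAnsatz, kinkProfile, kinkDeriv_two, kinkDeriv, sqrt_one_sub_tanh_sq]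
  ring

theorem pendResidual_eq {d : ℝ} (hd : d ≠ 0) (a t : ℝ) :
    pendResidual a d t = kinkProfile a d (d * t / eps d + d) +
      kinkProfile a d (d * t / eps d - d) - 2 * kinkProfile a d (d * t / eps d) -
      eps d ^ 2 * sin (kinkProfile a d (d * t / eps d)) := by
  have he := eps_ne_zero hd
  simp only [pendResidual, qAnsatz_eq_kinkProfile]
  congr 4 <;> field_simp

theorem kink_fourth_order_coefficient (a x : ℝ) :
    kinkDeriv 4 x / 12 + a / 2 * kinkDeriv 4 x - kinkDeriv 2 x / 12 -
      a / 2 * kinkDeriv 2 x * cos (kinkDeriv 0 x) = -(1 + 4 * a) * (tanh x / cosh x ^ 3) := by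
  have hc := (cosh_pos x).ne'
  rw [kinkDeriv_four, kinkDeriv_two, cos_kinkDeriv_zero, tanh_eq_sinh_div_cosh]
  field_simp
  linear_combination -24 * (1 + 6 * a) * sinh x * cosh_sq x

theorem kinkProfile_residual_add_isBigO (a : ℝ) (s : ℝ → ℝ) :
    (fun d => kinkProfile a d (s d + d) + kinkProfile a d (s d - d) -
        2 * kinkProfile a d (s d) - eps d ^ 2 * sin (kinkProfile a d (s d)) +
        (1 + 4 * a) * d ^ 4 * (tanh (s d) / cosh (s d) ^ 3)) =O[𝓝 0] fun d => d ^ 6 := by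
  obtain ⟨C₁, hC₁⟩ := exists_abs_kink_second_difference_sub_le
  obtain ⟨C₂, hC₂⟩ := exists_abs_kinkDeriv_two_second_difference_sub_le
  obtain ⟨M, hM⟩ := exists_abs_kinkDeriv_le 1
  set φ : ℕ → ℝ → ℝ := fun k d => kinkDeriv k (s d)
  set X : ℝ → ℝ := fun d => d ^ 2 * (a / 2) * φ 2 d
  have hX : X =O[𝓝 0] fun d => d ^ 2 := by
    refine IsBigO.of_bound (|a| / 2 * M) (Eventually.of_forall fun d => ?_)
    simp only [X, φ, norm_mul, Real.norm_eq_abs, abs_pow, abs_div, abs_two]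
    calc _ ≤ |d| ^ 2 * (|a| / 2) * M := by gcongr; exact hM (s d)
      _ = _ := by ring
  have h₁ : (fun d => kinkDeriv 0 (s d + d) + kinkDeriv 0 (s d - d) - 2 * φ 0 d -
      d ^ 2 * φ 2 d - d ^ 4 / 12 * φ 4 d) =O[𝓝 0] fun d => d ^ 6 :=
    IsBigO.of_bound C₁ (Eventually.of_forall fun d => by simpa [abs_pow] using hC₁ (s d) d)
  have h₂ : (fun d => d ^ 2 * (a / 2) * (kinkDeriv 2 (s d + d) + kinkDeriv 2 (s d - d) -
      2 * φ 2 d - d ^ 2 * φ 4 d)) =O[𝓝 0] fun d => d ^ 6 := by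
    have hE : (fun d => kinkDeriv 2 (s d + d) + kinkDeriv 2 (s d - d) - 2 * φ 2 d -
        d ^ 2 * φ 4 d) =O[𝓝 0] fun d => d ^ 4 :=
      IsBigO.of_bound C₂ (Eventually.of_forall fun d => by simpa [abs_pow] using hC₂ (s d) d)
    exact ((isBigO_refl (fun d : ℝ => d ^ 2) _).const_mul_left (a / 2) |>.mul hE).congr
      (fun d => by ring) (fun d => by ring)
  have h₃ : (fun d => (d ^ 2 + d ^ 4 / 12) *
      (sin (kinkProfile a d (s d)) - sin (φ 0 d) - X d * cos (φ 0 d))) =O[𝓝 0] fun d => d ^ 6 := by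
    have hE : (fun d => sin (kinkProfile a d (s d)) - sin (φ 0 d) - X d * cos (φ 0 d))
        =O[𝓝 0] fun d => d ^ 4 := by
      refine IsBigO.trans (IsBigO.of_bound (1 / 2) (Eventually.of_forall fun d => ?_))
        ((hX.pow 2).congr_right fun d => by ring)
      rw [show kinkProfile a d (s d) = φ 0 d + X d from add_comm _ _]
      simpa [abs_pow, div_eq_inv_mul] using abs_sin_add_sub_le (φ 0 d) (X d)
    have hP : (fun d : ℝ => d ^ 2 + d ^ 4 / 12) =O[𝓝 0] fun d => d ^ 2 :=
      (isBigO_refl _ _).add (((isLittleO_pow_pow (by norm_num : 2 < 4)).isBigO.const_mul_left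
        (1 / 12)).congr_left fun d => by ring)
    exact (hP.mul hE).congr_right fun d => by ring
  have h₄ : (fun d => (eps d ^ 2 - d ^ 2 - d ^ 4 / 12) * sin (kinkProfile a d (s d)))
      =O[𝓝 0] fun d => d ^ 6 := by
    have hE : (fun d => eps d ^ 2 - d ^ 2 - d ^ 4 / 12) =O[𝓝 0] fun d => d ^ 6 := by
      refine IsBigO.of_bound (exp 1 / 360) ?_
      filter_upwards [Metric.closedBall_mem_nhds (0 : ℝ) one_pos] with d hd
      rw [mem_closedBall_zero_iff, Real.norm_eq_abs] at hd
      simpa [abs_pow] using abs_eps_sq_sub_le hd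
    have hsin : (fun d => sin (kinkProfile a d (s d))) =O[𝓝 0] fun _ => (1 : ℝ) :=
      IsBigO.of_bound 1 (Eventually.of_forall fun d => by simpa using abs_sin_le_one _)
    exact (hE.mul hsin).congr_right fun d => mul_one _
  have h₅ : (fun d => d ^ 6 * (a / 24) * (φ 2 d * cos (φ 0 d))) =O[𝓝 0] fun d => d ^ 6 := by
    have hB : (fun d => φ 2 d * cos (φ 0 d)) =O[𝓝 0] fun _ => (1 : ℝ) := by
      refine IsBigO.of_bound M (Eventually.of_forall fun d => ?_)
      rw [norm_mul, norm_one, mul_one, Real.norm_eq_abs, Real.norm_eq_abs]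
      exact (mul_le_of_le_one_right (abs_nonneg _) (abs_cos_le_one _)).trans (hM (s d))
    exact ((isBigO_refl (fun d : ℝ => d ^ 6) _).mul (hB.const_mul_left (a / 24))).congr
      (fun d => by ring) (fun d => mul_one _)
  -- The `d²` terms cancel by `φ'' = sin φ`, the `d⁴` terms by `kink_fourth_order_coefficient`.
  refine ((((h₁.add h₂).sub h₃).sub h₄).sub h₅).congr_left fun d => ?_
  simp only [kinkProfile, φ, X]
  linear_combination (-(d ^ 4)) * kink_fourth_order_coefficient a (s d) +
    (d ^ 2 + d ^ 4 / 12) * sin_kinkDeriv_zero (s d)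

theorem pendResidual_add_isBigO (a t : ℝ) :
    (fun d => pendResidual a d t +
        (1 + 4 * a) * d ^ 4 * (tanh (d * t / eps d) / cosh (d * t / eps d) ^ 3))
      =O[𝓝[>] 0] fun d => d ^ 6 :=
  ((kinkProfile_residual_add_isBigO a fun d => d * t / eps d).mono nhdsWithin_le_nhds).congr'
    (eventually_nhdsWithin_of_forall fun d hd => by dsimp only; rw [pendResidual_eq (ne_of_gt hd)])
    EventuallyEq.rfl

theorem tendsto_div_eps : Tendsto (fun d => d / eps d) (𝓝[>] 0) (𝓝 1) := by
  have h : HasDerivAt eps 1 0 := by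
    refine (((hasDerivAt_id (0 : ℝ)).div_const 2).sinh.const_mul 2).congr_deriv ?_
    simp
  have h' := h.tendsto_slope_zero_right.inv₀ one_ne_zero
  rw [inv_one] at h'
  refine h'.congr fun d => ?_
  simp only [eps, zero_add, zero_div, sinh_zero, mul_zero, sub_zero, smul_eq_mul, mul_inv_rev,
    inv_inv]
  ring

theorem not_pow_four_isBigO_pow_six : ¬ (fun d : ℝ => d ^ 4) =O[𝓝[>] 0] fun d => d ^ 6 :=
  fun h => isLittleO_irrefl
    (eventually_nhdsWithin_of_forall (s := Ioi 0) fun _ hd => pow_ne_zero 4 hd.ne').frequently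
    (h.trans_isLittleO ((isLittleO_pow_pow (by norm_num : 4 < 6)).mono nhdsWithin_le_nhds))

theorem leading_coefficient_is_minus_quarter (a : ℝ) :
    (∀ t : ℝ,
      (fun d : ℝ => pendResidual a d t) =O[nhdsWithin 0 (Set.Ioi 0)]
        (fun d : ℝ => d ^ 6)) ↔ a = -(1 / 4) := by
  refine ⟨fun h => ?_, fun ha t => ?_⟩
  · by_contra ha
    have hc : 1 + 4 * a ≠ 0 := fun h' => ha (by linarith)
    set L : ℝ → ℝ := fun x => tanh x / cosh x ^ 3
    have hL : ContinuousAt L 1 :=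
      (hasDerivAt_tanh 1).continuousAt.div (continuous_cosh.continuousAt.pow 3) (by positivity)
    have hL1 : L 1 ≠ 0 := by
      have := sinh_pos_iff.2 one_pos
      simp only [L, tanh_eq_sinh_div_cosh]
      positivity
    have hlead :=
      ((pendResidual_add_isBigO a 1).sub (h 1)).congr_left fun _ => add_sub_cancel_left _ _
    have hlim : Tendsto (fun d => (1 + 4 * a) * d ^ 4 * L (d * 1 / eps d) / d ^ 4) (𝓝[>] 0)
        (𝓝 ((1 + 4 * a) * L 1)) := by
      refine (tendsto_const_nhds.mul (hL.tendsto.comp (by simpa using tendsto_div_eps))).congr'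
        (eventually_nhdsWithin_of_forall fun d (hd : 0 < d) => ?_)
      simp only [Function.comp_apply, mul_one]
      field_simp [hd.ne']
    exact not_pow_four_isBigO_pow_six
      ((isBigO_of_div_tendsto_nhds_of_ne_zero hlim (mul_ne_zero hc hL1)).trans hlead)
  · subst ha
    simpa [show (1 : ℝ) + 4 * -(1 / 4) = 0 by norm_num] using pendResidual_add_isBigO (-(1 / 4)) t
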